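/- Let A be a residuated lattice, F a filter of A, and m₁, m₂ two distinct F-minimal prime filters of A. Then ω_F(J) = A, where J is the lattice ideal of A generated by (A \ m₁) ∪ (A \ m₂); that is, the supremum of m₁ and m₂ in the lattice of ω_F-filters equals A. -/

import Mathlib

class ResiduatedLattice (α : Type*) extends Lattice α, CommMonoid α, BoundedOrder α where
  rimp : α → α → α
  one_eq_top : (1 : α) = ⊤
  adjunction : ∀ x y z : α, x * y ≤ z ↔ x ≤ rimp y z

variable {α : Type*} [ResiduatedLattice α]

/-- A filter of a residuated lattice: nonempty, closed under `⊙` and upward closed. -/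
def IsFilter (F : Set α) : Prop :=
  F.Nonempty ∧ (∀ x ∈ F, ∀ y ∈ F, x * y ∈ F) ∧ ∀ x ∈ F, ∀ y : α, x ≤ y → y ∈ F

/-- A prime filter: a proper filter such that `x ⊔ y ∈ P` implies `x ∈ P` or `y ∈ P`. -/
def IsPrimeFilter (P : Set α) : Prop :=
  IsFilter P ∧ P ≠ Set.univ ∧ ∀ x y : α, x ⊔ y ∈ P → x ∈ P ∨ y ∈ P

/-- A `∨`-closed subset: nonempty and closed under join. -/
def IsJoinClosed (C : Set α) : Prop :=
  C.Nonempty ∧ ∀ x ∈ C, ∀ y ∈ C, x ⊔ y ∈ C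

/-- The filter generated by a set. -/
def filterGen (X : Set α) : Set α := ⋂₀ {G : Set α | IsFilter G ∧ X ⊆ G}

/-- An `X`-minimal prime filter: prime, contains `X`, minimal among primes containing `X`. -/
def IsMinPrimeOver (X P : Set α) : Prop :=
  IsPrimeFilter P ∧ X ⊆ P ∧ ∀ Q : Set α, IsPrimeFilter Q → X ⊆ Q → Q ⊆ P → Q = P

/-- `ω_F(X) = {a | x ∨ a ∈ F for some x ∈ X}`. -/
def omegaF (F X : Set α) : Set α := {a : α | ∃ x ∈ X, x ⊔ a ∈ F}

/-- The coannihilator `(F : x) = {a | x ∨ a ∈ F}`. -/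
def coann (F : Set α) (x : α) : Set α := {a : α | x ⊔ a ∈ F}

/-- `D_F(H) = {a | x ∨ a ∈ F for some x ∉ H}`, the set of `F`-divisors of `H`. -/
def divisorsF (F H : Set α) : Set α := {a : α | ∃ x ∉ H, x ⊔ a ∈ F}

/-- A lattice ideal: nonempty, closed under join and downward closed. -/
def IsLatticeIdeal (I : Set α) : Prop :=
  I.Nonempty ∧ (∀ x ∈ I, ∀ y ∈ I, x ⊔ y ∈ I) ∧ ∀ x y : α, x ≤ y → y ∈ I → x ∈ I

/-- The lattice ideal generated by a set. -/
def idealGen (X : Set α) : Set α := ⋂₀ {I : Set α | IsLatticeIdeal I ∧ X ⊆ I}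

/-- An `ω_F`-filter: a filter of the form `ω_F(I)` for some lattice ideal `I`. -/
def IsOmegaFilter (F H : Set α) : Prop :=
  IsFilter H ∧ ∃ I : Set α, IsLatticeIdeal I ∧ H = omegaF F I

/-!
Since `m₁ ≠ m₂` and `m₂` is minimal, there is `b ∈ m₁ \ m₂`. Minimality of `m₁` gives
`m₁ = ω_F(A \ m₁)`, so `x ⊔ b ∈ F` for some `x ∉ m₁`. Then `x ⊔ b` lies both in `F` and in the
ideal generated by `m₁ᶜ ∪ m₂ᶜ`, which forces `ω_F` of that ideal to be all of `A`.

The identity `m = ω_F(A \ m)` is proved by prime filter separation: were `a ∈ m` a counterexample,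
a prime filter over `F` avoiding the join-closed set `{x ⊔ a | x ∉ m}` would lie in `m` and miss `a`.
-/

namespace ResiduatedLattice

theorem le_one (a : α) : a ≤ 1 := one_eq_top (α := α) ▸ le_top

instance : IsOrderedMonoid α where
  mul_le_mul_left a b h c := (adjunction a c (b * c)).2 (h.trans ((adjunction b c _).1 le_rfl))

theorem mul_sup (a b c : α) : a * (b ⊔ c) = a * b ⊔ a * c := by
  refine le_antisymm ?_ (sup_le (mul_le_mul_right le_sup_left a) (mul_le_mul_right le_sup_right a))
  rw [mul_comm, adjunction]
  refine sup_le ((adjunction _ _ _).1 ?_) ((adjunction _ _ _).1 ?_) <;> rw [mul_comm]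
  exacts [le_sup_left, le_sup_right]

theorem sup_mul (a b c : α) : (a ⊔ b) * c = a * c ⊔ b * c := by
  simp only [mul_comm _ c, mul_sup]

theorem sup_mul_sup_le (a b c : α) : (a ⊔ b) * (a ⊔ c) ≤ a ⊔ b * c := by
  rw [mul_sup, sup_mul, sup_mul]
  refine sup_le (sup_le ?_ ?_) (sup_le ?_ le_sup_right) <;> refine le_sup_of_le_left ?_
  exacts [mul_le_of_le_one_right' (le_one a), mul_le_of_le_one_left' (le_one b),
    mul_le_of_le_one_right' (le_one c)]

theorem pow_sup_le (a w : α) : ∀ n : ℕ, (a ⊔ w) ^ n ≤ a ^ n ⊔ w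
  | 0 => by simp
  | n + 1 =>
    calc (a ⊔ w) ^ (n + 1) = (a ⊔ w) ^ n * (a ⊔ w) := pow_succ _ _
      _ ≤ (w ⊔ a ^ n) * (w ⊔ a) := by
        rw [sup_comm w, sup_comm w]; exact mul_le_mul_left (pow_sup_le a w n) _
      _ ≤ a ^ (n + 1) ⊔ w := by rw [pow_succ, sup_comm _ w]; exact sup_mul_sup_le w _ a

theorem pow_mul_le_pow_sup_pow (x y : α) (m n : ℕ) : (x ⊔ y) ^ (m * n) ≤ x ^ n ⊔ y ^ m := by
  have hxy : (x ⊔ y) ^ m ≤ x ⊔ y ^ m := by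
    rw [sup_comm x, sup_comm x]; exact pow_sup_le y x m
  calc (x ⊔ y) ^ (m * n) = ((x ⊔ y) ^ m) ^ n := pow_mul _ _ _
    _ ≤ (x ⊔ y ^ m) ^ n := pow_le_pow_left' hxy n
    _ ≤ x ^ n ⊔ y ^ m := pow_sup_le x _ n

theorem mul_mul_sup_le (p q a b : α) : p * q * (a ⊔ b) ≤ p * a ⊔ q * b := by
  rw [mul_sup]
  refine sup_le_sup ?_ ?_
  · rw [mul_right_comm]; exact mul_le_of_le_one_right' (le_one q)
  · rw [mul_assoc]; exact mul_le_of_le_one_left' (le_one p)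

end ResiduatedLattice

open ResiduatedLattice

namespace IsFilter

variable {F : Set α} {a b : α}

theorem mem_of_le (hF : IsFilter F) (ha : a ∈ F) (hab : a ≤ b) : b ∈ F := hF.2.2 a ha b hab

theorem mul_mem (hF : IsFilter F) (ha : a ∈ F) (hb : b ∈ F) : a * b ∈ F := hF.2.1 a ha b hb

theorem pow_mem (hF : IsFilter F) (ha : a ∈ F) : ∀ n : ℕ, a ^ n ∈ F
  | 0 => hF.mem_of_le ha (by simpa using le_one a)
  | n + 1 => by rw [pow_succ]; exact hF.mul_mem (hF.pow_mem ha n) ha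

theorem sUnion_of_isChain {c : Set (Set α)} (hc : ∀ G ∈ c, IsFilter G)
    (hchain : IsChain (· ⊆ ·) c) (hne : c.Nonempty) : IsFilter (⋃₀ c) := by
  obtain ⟨G₀, hG₀⟩ := hne
  obtain ⟨g, hg⟩ := (hc G₀ hG₀).1
  refine ⟨⟨g, G₀, hG₀, hg⟩, ?_, ?_⟩
  · rintro x ⟨G₁, hG₁, hx⟩ y ⟨G₂, hG₂, hy⟩
    rcases hchain.total hG₁ hG₂ with h | h
    · exact ⟨G₂, hG₂, (hc G₂ hG₂).mul_mem (h hx) hy⟩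
    · exact ⟨G₁, hG₁, (hc G₁ hG₁).mul_mem hx (h hy)⟩
  · rintro x ⟨G, hG, hx⟩ y hxy
    exact ⟨G, hG, (hc G hG).mem_of_le hx hxy⟩

end IsFilter

/-- The filter generated by a filter `P` together with an element `x`. -/
def filterAdjoin (P : Set α) (x : α) : Set α := {z | ∃ p ∈ P, ∃ n : ℕ, p * x ^ n ≤ z}

section filterAdjoin

variable {P : Set α}

theorem IsFilter.filterAdjoin (hP : IsFilter P) (x : α) : IsFilter (filterAdjoin P x) := by
  obtain ⟨p₀, hp₀⟩ := hP.1
  refine ⟨⟨p₀, p₀, hp₀, 0, by simp⟩, ?_, ?_⟩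
  · rintro z ⟨p, hp, n, hn⟩ w ⟨q, hq, m, hm⟩
    refine ⟨p * q, hP.mul_mem hp hq, n + m, ?_⟩
    rw [pow_add, mul_mul_mul_comm]
    exact mul_le_mul' hn hm
  · rintro z ⟨p, hp, n, hn⟩ w hzw
    exact ⟨p, hp, n, hn.trans hzw⟩

theorem subset_filterAdjoin (x : α) : P ⊆ filterAdjoin P x :=
  fun p hp => ⟨p, hp, 0, by simp⟩

theorem mem_filterAdjoin_self (hP : P.Nonempty) (x : α) : x ∈ filterAdjoin P x := by
  obtain ⟨p, hp⟩ := hP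
  exact ⟨p, hp, 1, by simpa using mul_le_of_le_one_left' (le_one p)⟩

end filterAdjoin

section Separation

variable {F C P : Set α}

theorem IsFilter.exists_maximal_disjoint (hF : IsFilter F) (hFC : Disjoint F C) :
    ∃ P, F ⊆ P ∧ Maximal (fun G => IsFilter G ∧ Disjoint G C) P :=
  zorn_subset_nonempty {G | IsFilter G ∧ Disjoint G C}
    (fun c hc hchain hne => ⟨⋃₀ c,
      ⟨IsFilter.sUnion_of_isChain (fun _ hG => (hc hG).1) hchain hne,
        Set.disjoint_sUnion_left.2 fun _ hG => (hc hG).2⟩,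
      fun _ => Set.subset_sUnion_of_mem⟩) F ⟨hF, hFC⟩

theorem exists_mem_filterAdjoin_of_maximal (hP : Maximal (fun G => IsFilter G ∧ Disjoint G C) P)
    {w : α} (hw : w ∉ P) : ∃ c ∈ C, c ∈ filterAdjoin P w := by
  by_contra! hno
  have hdisj : Disjoint (filterAdjoin P w) C :=
    Set.disjoint_right.2 fun c hc => hno c hc
  exact hw (hP.2 ⟨hP.1.1.filterAdjoin w, hdisj⟩ (subset_filterAdjoin w)
    (mem_filterAdjoin_self hP.1.1.1 w))

theorem isPrimeFilter_of_maximal (hC : IsJoinClosed C)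
    (hP : Maximal (fun G => IsFilter G ∧ Disjoint G C) P) : IsPrimeFilter P := by
  obtain ⟨hPF, hPC⟩ := hP.1
  obtain ⟨c₀, hc₀⟩ := hC.1
  refine ⟨hPF, fun h => Set.disjoint_right.1 hPC hc₀ (h ▸ Set.mem_univ c₀), fun x y hxy => ?_⟩
  by_contra! hxy'
  obtain ⟨c₁, hc₁, p, hp, n, hn⟩ := exists_mem_filterAdjoin_of_maximal hP hxy'.1
  obtain ⟨c₂, hc₂, q, hq, m, hm⟩ := exists_mem_filterAdjoin_of_maximal hP hxy'.2
  have hle : p * q * (x ⊔ y) ^ (m * n) ≤ c₁ ⊔ c₂ :=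
    calc p * q * (x ⊔ y) ^ (m * n) ≤ p * q * (x ^ n ⊔ y ^ m) :=
          mul_le_mul_right (pow_mul_le_pow_sup_pow x y m n) _
      _ ≤ p * x ^ n ⊔ q * y ^ m := mul_mul_sup_le p q _ _
      _ ≤ c₁ ⊔ c₂ := sup_le_sup hn hm
  have hmem : p * q * (x ⊔ y) ^ (m * n) ∈ P :=
    hPF.mul_mem (hPF.mul_mem hp hq) (hPF.pow_mem hxy _)
  exact Set.disjoint_left.1 hPC (hPF.mem_of_le hmem hle) (hC.2 c₁ hc₁ c₂ hc₂)

theorem IsFilter.exists_isPrimeFilter_disjoint (hF : IsFilter F) (hC : IsJoinClosed C)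
    (hFC : Disjoint F C) : ∃ P, IsPrimeFilter P ∧ F ⊆ P ∧ Disjoint P C := by
  obtain ⟨P, hFP, hP⟩ := hF.exists_maximal_disjoint hFC
  exact ⟨P, isPrimeFilter_of_maximal hC hP, hFP, hP.1.2⟩

end Separation

theorem IsMinPrimeOver.subset_omegaF_compl {F m : Set α} (hF : IsFilter F)
    (hm : IsMinPrimeOver F m) : m ⊆ omegaF F mᶜ := by
  intro a ha
  by_contra hno
  obtain ⟨⟨hmF, hmne, hmprime⟩, hFm, hmin⟩ := hm
  obtain ⟨t, ht⟩ := Set.nonempty_compl.2 hmne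
  set C := (· ⊔ a) '' mᶜ
  have hC : IsJoinClosed C := by
    refine ⟨⟨t ⊔ a, t, ht, rfl⟩, ?_⟩
    rintro _ ⟨x, hx, rfl⟩ _ ⟨y, hy, rfl⟩
    refine ⟨x ⊔ y, fun hxy => (hmprime x y hxy).elim hx hy, sup_sup_distrib_right x y a⟩
  have hFC : Disjoint F C := Set.disjoint_left.2 <| by
    rintro _ hcF ⟨x, hx, rfl⟩
    exact hno ⟨x, hx, hcF⟩
  obtain ⟨P, hP, hFP, hPC⟩ := hF.exists_isPrimeFilter_disjoint hC hFC
  have hPm : P ⊆ m := fun p hp => by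
    by_contra hpm
    exact Set.disjoint_left.1 hPC (hP.1.mem_of_le hp le_sup_left) ⟨p, hpm, rfl⟩
  rw [hmin P hP hFP hPm] at hPC
  exact Set.disjoint_left.1 hPC (hmF.mem_of_le ha le_sup_right) ⟨t, ht, rfl⟩

theorem sup_mem_idealGen {X : Set α} {x y : α} (hx : x ∈ X) (hy : y ∈ X) :
    x ⊔ y ∈ idealGen X :=
  Set.mem_sInter.2 fun _ ⟨hI, hXI⟩ => hI.2.1 x (hXI hx) y (hXI hy)

theorem omegaF_eq_univ_of_mem {F X : Set α} (hF : IsFilter F) {x : α} (hxX : x ∈ X)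
    (hxF : x ∈ F) : omegaF F X = Set.univ :=
  Set.eq_univ_of_forall fun _ => ⟨x, hxX, hF.mem_of_le hxF le_sup_left⟩

/-- Corollary 3.15: for two distinct `F`-minimal prime filters `m₁, m₂`,
their supremum in the lattice of `ω_F`-filters, namely `ω_F` of the ideal generated by
`m₁ᶜ ∪ m₂ᶜ`, equals `A`. -/
theorem stmt_10 (F m₁ m₂ : Set α) (hF : IsFilter F)
    (h1 : IsMinPrimeOver F m₁) (h2 : IsMinPrimeOver F m₂) (hne : m₁ ≠ m₂) :
    omegaF F (idealGen (m₁ᶜ ∪ m₂ᶜ)) = Set.univ := by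
  obtain ⟨b, hb₁, hb₂⟩ := Set.not_subset.1 fun h => hne (h2.2.2 m₁ h1.1 h1.2.1 h)
  obtain ⟨x, hx₁, hxb⟩ := h1.subset_omegaF_compl hF hb₁
  exact omegaF_eq_univ_of_mem hF (sup_mem_idealGen (Or.inl hx₁) (Or.inr hb₂)) hxb
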